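/- arXiv:1109.2005 — 4 statements merged into one kernel-verified Lean document; each statement's English description precedes it below -/
import Mathlib

section
/- Let Y = (ζ,U,H,v,w,h) ∈ C¹([0,T],F) be a solution of the system Y_t = G(Y). Then the quantity I(Y) = U²q² + w² − qh (where q = 1 + v) is conserved: for every t ∈ [0,T] one has U(t)²q(t)² + w(t)² − q(t)h(t) = U(0)²q(0)² + w(0)² − q(0)h(0) almost everywhere in ξ ∈ ℝ. -/
open MeasureTheory Real Filter Set
open scoped ENNReal NNReal Topology

noncomputable section

/-- An element `Y = (ζ, U, H, v, w, h)` of the function space underlying `F`. -/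
structure El where
  zeta : ℝ → ℝ
  U : ℝ → ℝ
  H : ℝ → ℝ
  v : ℝ → ℝ
  w : ℝ → ℝ
  h : ℝ → ℝ

namespace El

instance : Add El :=
  ⟨fun Y Z => ⟨Y.zeta + Z.zeta, Y.U + Z.U, Y.H + Z.H, Y.v + Z.v, Y.w + Z.w, Y.h + Z.h⟩⟩

instance : Sub El :=
  ⟨fun Y Z => ⟨Y.zeta - Z.zeta, Y.U - Z.U, Y.H - Z.H, Y.v - Z.v, Y.w - Z.w, Y.h - Z.h⟩⟩

instance : SMul ℝ El :=
  ⟨fun c Y => ⟨c • Y.zeta, c • Y.U, c • Y.H, c • Y.v, c • Y.w, c • Y.h⟩⟩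

/-- `q = 1 + v`. -/
def q (Y : El) : ℝ → ℝ := fun ξ => 1 + Y.v ξ

/-- `y(ξ) = ζ(ξ) + ξ`. -/
def y (Y : El) : ℝ → ℝ := fun ξ => Y.zeta ξ + ξ

end El

/-- Real-valued `L^p` norm of a real function. -/
def nn (p : ℝ≥0∞) (f : ℝ → ℝ) : ℝ := (eLpNorm f p (volume : Measure ℝ)).toReal

/-- Membership in the Banach space
`F = L^∞ × (L^∞ ∩ L²) × L^∞ × L² × L² × L²`. -/
def memF (Y : El) : Prop :=
  Measurable Y.zeta ∧ Measurable Y.U ∧ Measurable Y.H ∧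
  Measurable Y.v ∧ Measurable Y.w ∧ Measurable Y.h ∧
  eLpNorm Y.zeta ⊤ volume < ⊤ ∧
  eLpNorm Y.U 2 volume < ⊤ ∧ eLpNorm Y.U ⊤ volume < ⊤ ∧
  eLpNorm Y.H ⊤ volume < ⊤ ∧
  eLpNorm Y.v 2 volume < ⊤ ∧ eLpNorm Y.w 2 volume < ⊤ ∧ eLpNorm Y.h 2 volume < ⊤

/-- The norm on `F`:
`‖Y‖_F = ‖ζ‖_∞ + ‖U‖_2 + ‖U‖_∞ + ‖H‖_∞ + ‖v‖_2 + ‖w‖_2 + ‖h‖_2`. -/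
def normF (Y : El) : ℝ :=
  nn ⊤ Y.zeta + nn 2 Y.U + nn ⊤ Y.U + nn ⊤ Y.H + nn 2 Y.v + nn 2 Y.w + nn 2 Y.h

/-- The integrand `((3-2γ)/2) U² q + (γ/2) h`. -/
def integrandPQ (γ : ℝ) (Y : El) (η : ℝ) : ℝ :=
  (3 - 2 * γ) / 2 * (Y.U η) ^ 2 * Y.q η + γ / 2 * Y.h η

/-- The map `P`. -/
def Pmap (γ : ℝ) (Y : El) : ℝ → ℝ := fun ξ =>
  (1 / 2) * ∫ η : ℝ,
    Real.exp (-(Real.sign (ξ - η)) * (Y.y ξ - Y.y η)) * integrandPQ γ Y η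

/-- The map `Q`. -/
def Qmap (γ : ℝ) (Y : El) : ℝ → ℝ := fun ξ =>
  -(1 / 2) * ∫ η : ℝ,
    Real.sign (ξ - η) * Real.exp (-(Real.sign (ξ - η)) * (Y.y ξ - Y.y η)) *
      integrandPQ γ Y η

/-- The vector field `G` of the system (3.1). -/
def Gmap (γ : ℝ) (Y : El) : El where
  zeta := fun ξ => γ * Y.U ξ
  U := fun ξ => -(Qmap γ Y ξ)
  H := fun ξ => (Y.U ξ) ^ 3 - 2 * Pmap γ Y ξ * Y.U ξ
  v := fun ξ => γ * Y.w ξ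
  w := fun ξ => γ / 2 * Y.h ξ + ((3 - 2 * γ) / 2 * (Y.U ξ) ^ 2 - Pmap γ Y ξ) * Y.q ξ
  h := fun ξ => -2 * Qmap γ Y ξ * Y.U ξ * Y.q ξ + (3 * (Y.U ξ) ^ 2 - 2 * Pmap γ Y ξ) * Y.w ξ

/-- `Ys : ℝ → El` is a `C¹([0,T], F)` solution of `Y_t = Gf(Y)`. -/
def IsSolutionOn (Gf : El → El) (Ys : ℝ → El) (T : ℝ) : Prop :=
  (∀ t ∈ Icc (0 : ℝ) T, memF (Ys t)) ∧
  (∀ t ∈ Icc (0 : ℝ) T, ∀ ξ : ℝ,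
      HasDerivWithinAt (fun s => (Ys s).zeta ξ) ((Gf (Ys t)).zeta ξ) (Icc 0 T) t ∧
      HasDerivWithinAt (fun s => (Ys s).U ξ) ((Gf (Ys t)).U ξ) (Icc 0 T) t ∧
      HasDerivWithinAt (fun s => (Ys s).H ξ) ((Gf (Ys t)).H ξ) (Icc 0 T) t ∧
      HasDerivWithinAt (fun s => (Ys s).v ξ) ((Gf (Ys t)).v ξ) (Icc 0 T) t ∧
      HasDerivWithinAt (fun s => (Ys s).w ξ) ((Gf (Ys t)).w ξ) (Icc 0 T) t ∧
      HasDerivWithinAt (fun s => (Ys s).h ξ) ((Gf (Ys t)).h ξ) (Icc 0 T) t) ∧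
  (∀ s ∈ Icc (0 : ℝ) T,
    Tendsto (fun t => normF (Ys t - Ys s)) (nhdsWithin s (Icc 0 T)) (nhds 0))

/-- Membership in the decay space `F^e`. -/
def memFe (Y : El) : Prop :=
  memF Y ∧
  eLpNorm Y.q ⊤ volume < ⊤ ∧ eLpNorm Y.w ⊤ volume < ⊤ ∧ eLpNorm Y.h ⊤ volume < ⊤ ∧
  eLpNorm (fun ξ => Real.exp (|ξ| / 2) * Y.U ξ) 2 volume < ⊤ ∧
  eLpNorm (fun ξ => Real.exp (|ξ| / 2) * Y.w ξ) 2 volume < ⊤ ∧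
  eLpNorm (fun ξ => Real.exp |ξ| * Y.h ξ) 1 volume < ⊤

/-- The norm on `F^e`. -/
def normFe (Y : El) : ℝ :=
  normF Y + nn ⊤ Y.q + nn ⊤ Y.w + nn ⊤ Y.h +
    nn 2 (fun ξ => Real.exp (|ξ| / 2) * Y.U ξ) +
    nn 2 (fun ξ => Real.exp (|ξ| / 2) * Y.w ξ) +
    nn 1 (fun ξ => Real.exp |ξ| * Y.h ξ)

/-- Membership in the decay space `F^α`. -/
def memFal (α : ℝ) (Y : El) : Prop :=
  memF Y ∧
  eLpNorm Y.q ⊤ volume < ⊤ ∧ eLpNorm Y.w ⊤ volume < ⊤ ∧ eLpNorm Y.h ⊤ volume < ⊤ ∧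
  eLpNorm (fun ξ => (1 + |ξ|) ^ (α / 2) * Y.U ξ) 2 volume < ⊤ ∧
  eLpNorm (fun ξ => (1 + |ξ|) ^ (α / 2) * Y.w ξ) 2 volume < ⊤ ∧
  eLpNorm (fun ξ => (1 + |ξ|) ^ α * Y.h ξ) 1 volume < ⊤

/-- The norm on `F^α`. -/
def normFal (α : ℝ) (Y : El) : ℝ :=
  normF Y + nn ⊤ Y.q + nn ⊤ Y.w + nn ⊤ Y.h +
    nn 2 (fun ξ => (1 + |ξ|) ^ (α / 2) * Y.U ξ) +
    nn 2 (fun ξ => (1 + |ξ|) ^ (α / 2) * Y.w ξ) +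
    nn 1 (fun ξ => (1 + |ξ|) ^ α * Y.h ξ)

/-- The set `𝒢`. -/
def memG (Y : El) : Prop :=
  memF Y ∧
  eLpNorm Y.q ⊤ volume < ⊤ ∧ eLpNorm Y.w ⊤ volume < ⊤ ∧ eLpNorm Y.h ⊤ volume < ⊤ ∧
  (∀ ξ : ℝ, HasDerivAt Y.y (Y.q ξ) ξ ∧ HasDerivAt Y.U (Y.w ξ) ξ ∧
    HasDerivAt Y.H (Y.h ξ) ξ) ∧
  (∀ᵐ ξ : ℝ ∂volume,
    Y.q ξ * Y.h ξ = (Y.U ξ) ^ 2 * (Y.q ξ) ^ 2 + (Y.w ξ) ^ 2) ∧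
  (∃ c : ℝ, 0 < c ∧ ∀ᵐ ξ : ℝ ∂volume, 0 ≤ Y.q ξ ∧ 0 ≤ Y.h ξ ∧ c ≤ Y.q ξ + Y.h ξ)

/-- The sampling operator `𝐏` on the grid `ξ_i = iΔξ`:
`𝐏(f)(ξ) = f(ξ_i)` for `ξ ∈ [ξ_i, ξ_{i+1})`. -/
def samp (Δ : ℝ) (f : ℝ → ℝ) : ℝ → ℝ := fun ξ => f (Δ * (⌊ξ / Δ⌋ : ℤ))

/-- The cut-off operator: restriction to `[-R, R)`. -/
def cutoff (R : ℝ) (f : ℝ → ℝ) : ℝ → ℝ := fun ξ =>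
  if -R ≤ ξ ∧ ξ < R then f ξ else 0

/-- `P_{Δξ}`. -/
def PmapD (γ Δ : ℝ) (Y : El) : ℝ → ℝ := samp Δ (Pmap γ Y)

/-- `Q_{Δξ}`. -/
def QmapD (γ Δ : ℝ) (Y : El) : ℝ → ℝ := samp Δ (Qmap γ Y)

/-- The semi-discrete vector field `G_{Δξ}`. -/
def GmapD (γ Δ : ℝ) (Y : El) : El where
  zeta := fun ξ => γ * Y.U ξ
  U := fun ξ => -(QmapD γ Δ Y ξ)
  H := fun ξ => (Y.U ξ) ^ 3 - 2 * PmapD γ Δ Y ξ * Y.U ξ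
  v := fun ξ => γ * Y.w ξ
  w := fun ξ => γ / 2 * Y.h ξ + ((3 - 2 * γ) / 2 * (Y.U ξ) ^ 2 - PmapD γ Δ Y ξ) * Y.q ξ
  h := fun ξ => -2 * QmapD γ Δ Y ξ * Y.U ξ * Y.q ξ +
    (3 * (Y.U ξ) ^ 2 - 2 * PmapD γ Δ Y ξ) * Y.w ξ

/-- `P_{Δξ,R}`. -/
def PmapDR (γ Δ R : ℝ) (Y : El) : ℝ → ℝ := cutoff R (samp Δ (Pmap γ Y))

/-- `Q_{Δξ,R}`. -/
def QmapDR (γ Δ R : ℝ) (Y : El) : ℝ → ℝ := cutoff R (samp Δ (Qmap γ Y))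

/-- The fully space-discrete vector field `G_{Δξ,R}`. -/
def GmapDR (γ Δ R : ℝ) (Y : El) : El where
  zeta := fun ξ => γ * Y.U ξ
  U := fun ξ => -(QmapDR γ Δ R Y ξ)
  H := fun ξ => (Y.U ξ) ^ 3 - 2 * PmapDR γ Δ R Y ξ * Y.U ξ
  v := fun ξ => γ * Y.w ξ
  w := fun ξ => γ / 2 * Y.h ξ + ((3 - 2 * γ) / 2 * (Y.U ξ) ^ 2 - PmapDR γ Δ R Y ξ) * Y.q ξ
  h := fun ξ => -2 * QmapDR γ Δ R Y ξ * Y.U ξ * Y.q ξ +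
    (3 * (Y.U ξ) ^ 2 - 2 * PmapDR γ Δ R Y ξ) * Y.w ξ

/-- `f` is constant on each grid cell `[ξ_i, ξ_{i+1})`. -/
def pieceConst (Δ : ℝ) (f : ℝ → ℝ) : Prop := ∀ ξ : ℝ, f ξ = f (Δ * (⌊ξ / Δ⌋ : ℤ))

/-- Membership in `F_{Δξ,R}`: piecewise-constant on the grid cells, with
`U, v, w, h` vanishing outside `[-R, R)` (so `q = 1` there) and `ζ, H`
constant on `(-∞,-R)` and on `[R,∞)`. -/
def memFgrid (Δ R : ℝ) (Y : El) : Prop :=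
  memF Y ∧
  pieceConst Δ Y.zeta ∧ pieceConst Δ Y.U ∧ pieceConst Δ Y.H ∧
  pieceConst Δ Y.v ∧ pieceConst Δ Y.w ∧ pieceConst Δ Y.h ∧
  (∀ ξ : ℝ, ξ < -R ∨ R ≤ ξ → Y.U ξ = 0 ∧ Y.v ξ = 0 ∧ Y.w ξ = 0 ∧ Y.h ξ = 0) ∧
  (∀ ξ η : ℝ, ξ < -R → η < -R → Y.zeta ξ = Y.zeta η ∧ Y.H ξ = Y.H η) ∧
  (∀ ξ η : ℝ, R ≤ ξ → R ≤ η → Y.zeta ξ = Y.zeta η ∧ Y.H ξ = Y.H η)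

/-- Bespoke notion of a continuously Fréchet differentiable map from `F` into a
normed target, phrased with an explicit derivative `DΦ`, the seminorm `nT` of
the target, the norm `normF` on the source and `ε`-`δ` limits. -/
def IsC1 {β : Type*} [Add β] [Sub β] [SMul ℝ β] (nT : β → ℝ)
    (Φ : El → β) (DΦ : El → El → β) : Prop :=
  (∀ Y Z₁ Z₂ : El, DΦ Y (Z₁ + Z₂) = DΦ Y Z₁ + DΦ Y Z₂) ∧
  (∀ (Y : El) (c : ℝ) (Z : El), DΦ Y (c • Z) = c • DΦ Y Z) ∧
  (∀ Y : El, memF Y → ∀ ε > (0 : ℝ), ∃ δ > (0 : ℝ), ∀ Z : El, memF Z → normF Z ≤ δ →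
      nT (Φ (Y + Z) - Φ Y - DΦ Y Z) ≤ ε * normF Z) ∧
  (∀ Y : El, memF Y → ∀ ε > (0 : ℝ), ∃ δ > (0 : ℝ), ∀ Y' : El, memF Y' →
      normF (Y' - Y) ≤ δ → ∀ Z : El, memF Z →
        nT (DΦ Y' Z - DΦ Y Z) ≤ ε * normF Z)

/-- The `H¹(ℝ)` norm (for the smooth functions `P(Y)`, `Q(Y)`). -/
def H1norm (f : ℝ → ℝ) : ℝ := nn 2 f + nn 2 (deriv f)

end

/-!
The conservation holds pointwise in `ξ`. At each `ξ`, the derivative of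
`I = U²q² + w² − qh` along `G` vanishes as a polynomial in `U, q, w, h, P, Q`: the
`Q`-terms of `U_t` and `h_t` cancel, as do the `P`-terms of `w_t` and `h_t`, and the
remaining `γ`-terms cancel too. Hence `t ↦ I(Y(t))(ξ)` has derivative zero on `[0, T]`,
so it is constant by the mean value inequality.
-/

theorem Convex.eq_of_hasDerivWithinAt_zero {E : Type*} [NormedAddCommGroup E]
    [NormedSpace ℝ E] {f : ℝ → E} {s : Set ℝ} (hs : Convex ℝ s)
    (hf : ∀ x ∈ s, HasDerivWithinAt f 0 s x) {x y : ℝ} (hx : x ∈ s) (hy : y ∈ s) :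
    f y = f x := by
  have h := hs.norm_image_sub_le_of_norm_hasDerivWithin_le hf (C := 0) (fun _ _ => by simp)
    hx hy
  rwa [zero_mul, norm_le_zero_iff, sub_eq_zero] at h

namespace El

def invariant (Y : El) (ξ : ℝ) : ℝ :=
  Y.U ξ ^ 2 * Y.q ξ ^ 2 + Y.w ξ ^ 2 - Y.q ξ * Y.h ξ

def invariantDeriv (Y Z : El) (ξ : ℝ) : ℝ :=
  2 * Y.U ξ * Z.U ξ * Y.q ξ ^ 2 + 2 * Y.U ξ ^ 2 * Y.q ξ * Z.v ξ + 2 * Y.w ξ * Z.w ξ -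
    Z.v ξ * Y.h ξ - Y.q ξ * Z.h ξ

theorem hasDerivWithinAt_invariant {Ys : ℝ → El} {Z : El} {s : Set ℝ} {t ξ : ℝ}
    (hU : HasDerivWithinAt (fun r => (Ys r).U ξ) (Z.U ξ) s t)
    (hv : HasDerivWithinAt (fun r => (Ys r).v ξ) (Z.v ξ) s t)
    (hw : HasDerivWithinAt (fun r => (Ys r).w ξ) (Z.w ξ) s t)
    (hh : HasDerivWithinAt (fun r => (Ys r).h ξ) (Z.h ξ) s t) :
    HasDerivWithinAt (fun r => (Ys r).invariant ξ) ((Ys t).invariantDeriv Z ξ) s t := by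
  have hq : HasDerivWithinAt (fun r => (Ys r).q ξ) (Z.v ξ) s t := hv.const_add 1
  refine ((((hU.pow 2).mul (hq.pow 2)).add (hw.pow 2)).sub (hq.mul hh)).congr_deriv ?_
  simp only [invariantDeriv, Pi.pow_apply, Nat.cast_ofNat]
  ring

theorem invariantDeriv_Gmap (γ : ℝ) (Y : El) (ξ : ℝ) : Y.invariantDeriv (Gmap γ Y) ξ = 0 := by
  simp only [invariantDeriv, Gmap, q]
  ring

end El

theorem IsSolutionOn.hasDerivWithinAt_invariant {γ T t : ℝ} {Ys : ℝ → El}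
    (hsol : IsSolutionOn (Gmap γ) Ys T) (ht : t ∈ Icc 0 T) (ξ : ℝ) :
    HasDerivWithinAt (fun s => (Ys s).invariant ξ) 0 (Icc 0 T) t := by
  obtain ⟨-, hU, -, hv, hw, hh⟩ := hsol.2.1 t ht ξ
  simpa only [El.invariantDeriv_Gmap] using El.hasDerivWithinAt_invariant hU hv hw hh

theorem stmt3_general (γ T : ℝ) (Ys : ℝ → El)
    (hsol : IsSolutionOn (Gmap γ) Ys T) :
    ∀ t ∈ Icc (0 : ℝ) T, ∀ᵐ ξ : ℝ ∂volume,
      ((Ys t).U ξ) ^ 2 * ((Ys t).q ξ) ^ 2 + ((Ys t).w ξ) ^ 2 -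
          (Ys t).q ξ * (Ys t).h ξ
        = ((Ys 0).U ξ) ^ 2 * ((Ys 0).q ξ) ^ 2 + ((Ys 0).w ξ) ^ 2 -
          (Ys 0).q ξ * (Ys 0).h ξ := by
  intro t ht
  refine .of_forall fun ξ => ?_
  have h0 : (0 : ℝ) ∈ Icc 0 T := left_mem_Icc.2 (ht.1.trans ht.2)
  exact (convex_Icc 0 T).eq_of_hasDerivWithinAt_zero
    (fun s hs => hsol.hasDerivWithinAt_invariant hs ξ) h0 ht

/-- the quantity `I(Y) = U²q² + w² − qh` is conserved along any
solution of `Y_t = G(Y)`, almost everywhere in `ξ`. -/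
theorem stmt3 (γ T : ℝ) (hT : 0 ≤ T) (Ys : ℝ → El)
    (hsol : IsSolutionOn (Gmap γ) Ys T) :
    ∀ t ∈ Icc (0 : ℝ) T, ∀ᵐ ξ : ℝ ∂volume,
      ((Ys t).U ξ) ^ 2 * ((Ys t).q ξ) ^ 2 + ((Ys t).w ξ) ^ 2 -
          (Ys t).q ξ * (Ys t).h ξ
        = ((Ys 0).U ξ) ^ 2 * ((Ys 0).q ξ) ^ 2 + ((Ys 0).w ξ) ^ 2 -
          (Ys 0).q ξ * (Ys 0).h ξ :=
  stmt3_general γ T Ys hsol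
end

section
/- Let Y₀ ∈ F satisfy: q₀, w₀, h₀ ∈ L∞(ℝ), q₀h₀ = U₀²q₀² + w₀² almost everywhere, and q₀ ≥ 0, h₀ ≥ 0, q₀ + h₀ ≥ c almost everywhere for some constant c > 0. Let Y ∈ C¹([0,T],F) solve Y_t = G(Y) with Y(0) = Y₀. Then for every t ∈ [0,T] one has q(t)h(t) = U(t)²q(t)² + w(t)² almost everywhere, q(t) ≥ 0 and h(t) ≥ 0 almost everywhere, and there exists a constant C, depending only on the norm of the initial data, such that q(t) + h(t) ≥ e^{−Ct}(q₀ + h₀) ≥ e^{−CT}c > 0 almost everywhere. -/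
open MeasureTheory Real Filter Set
open scoped ENNReal NNReal Topology

/-!
Fix `ξ` off a null set. Along the solution, `U, q, w, h` at `ξ` solve a scalar ODE system driven
by `P(Y)(ξ)` and `Q(Y)(ξ)`, and `qh - U²q² - w²` has zero time derivative, so the identity
propagates. The identity gives `qh ≥ 0` and `|2w|, |2Uq| ≤ |q + h|`, hence `g = q + h` satisfies
`|g'| ≤ C |g|` with `2C ≥ |γ| + 3U² + 2|P| + 2|Q|`. Then `exp (2Ct) g²` is nondecreasing, so `g`
never vanishes, stays positive, and `g t ≥ exp (-Ct) g 0`.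

The constant is uniform in `ξ`: the `F`-norm of the solution is continuous, hence bounded by some
`M` on `[0, T]`; the kernel of `P` and `Q` is at most `exp (2M - |ξ - η|)` where `|ζ| ≤ M`, which
bounds `P` and `Q` in terms of `M`; and the a.e. bounds `|ζ|, |U| ≤ M` hold simultaneously for all
times because the solution is continuous in `t` and a countable dense set of times suffices.
-/

lemma ae_forall_mem_of_continuousOn {X Ω β : Type*} [TopologicalSpace X]
    [TopologicalSpace.PseudoMetrizableSpace X] [TopologicalSpace.SeparableSpace X]
    [TopologicalSpace β] [MeasurableSpace Ω] {μ : Measure Ω} {S : Set X} {F : Set β}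
    (hF : IsClosed F) {f : X → Ω → β} (hcont : ∀ ω, ContinuousOn (fun t => f t ω) S)
    (hae : ∀ t ∈ S, ∀ᵐ ω ∂μ, f t ω ∈ F) :
    ∀ᵐ ω ∂μ, ∀ t ∈ S, f t ω ∈ F := by
  obtain ⟨D, hDS, hDc, hSD⟩ :=
    (TopologicalSpace.IsSeparable.of_separableSpace S).exists_countable_dense_subset
  filter_upwards [(ae_ball_iff hDc).2 fun t ht => hae t (hDS ht)] with ω hω t ht
  exact closure_minimal (image_subset_iff.2 hω) hF
    (((hcont ω t ht).mono hDS).mem_closure_image (hSD ht))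

lemma abs_lpNorm_sub_lpNorm_le {α E : Type*} [MeasurableSpace α] [NormedAddCommGroup E]
    {μ : Measure α} {p : ℝ≥0∞} {f g : α → E} (hf : MemLp f p μ) (hg : MemLp g p μ)
    (hp : 1 ≤ p) : |lpNorm f p μ - lpNorm g p μ| ≤ lpNorm (f - g) p μ := by
  rw [abs_sub_le_iff]
  have h1 := lpNorm_le_lpNorm_add_lpNorm_sub' (f := f) hg hp
  have h2 := lpNorm_le_lpNorm_add_lpNorm_sub' (f := g) hf hp
  rw [lpNorm_sub_comm g f] at h2
  constructor <;> linarith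

lemma lpNorm_two_sq {α : Type*} [MeasurableSpace α] {μ : Measure α} {f : α → ℝ}
    (hf : AEStronglyMeasurable f μ) : lpNorm f 2 μ ^ 2 = ∫ x, f x ^ 2 ∂μ := by
  rw [lpNorm_eq_integral_norm_rpow_toReal two_ne_zero ENNReal.ofNat_ne_top hf]
  simp only [ENNReal.toReal_ofNat, Real.rpow_two, Real.norm_eq_abs, sq_abs]
  exact Real.rpow_inv_natCast_pow (integral_nonneg fun x => sq_nonneg (f x)) two_ne_zero

lemma nn_eq_lpNorm {p : ℝ≥0∞} {f : ℝ → ℝ} (hf : Measurable f) : nn p f = lpNorm f p volume :=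
  toReal_eLpNorm hf.aestronglyMeasurable

lemma memLp_of_memF {Y : El} (hY : memF Y) :
    MemLp Y.zeta ⊤ volume ∧ MemLp Y.U 2 volume ∧ MemLp Y.U ⊤ volume ∧ MemLp Y.H ⊤ volume ∧
      MemLp Y.v 2 volume ∧ MemLp Y.w 2 volume ∧ MemLp Y.h 2 volume := by
  obtain ⟨mz, mU, mH, mv, mw, mh, fz, fU2, fU, fH, fv, fw, fh⟩ := hY
  exact ⟨⟨mz.aestronglyMeasurable, fz⟩, ⟨mU.aestronglyMeasurable, fU2⟩,
    ⟨mU.aestronglyMeasurable, fU⟩, ⟨mH.aestronglyMeasurable, fH⟩,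
    ⟨mv.aestronglyMeasurable, fv⟩, ⟨mw.aestronglyMeasurable, fw⟩, ⟨mh.aestronglyMeasurable, fh⟩⟩

lemma normF_eq_sum_lpNorm {Y : El} (hz : Measurable Y.zeta) (hU : Measurable Y.U)
    (hH : Measurable Y.H) (hv : Measurable Y.v) (hw : Measurable Y.w) (hh : Measurable Y.h) : normF Y =
    lpNorm Y.zeta ⊤ volume + lpNorm Y.U 2 volume + lpNorm Y.U ⊤ volume + lpNorm Y.H ⊤ volume +
      lpNorm Y.v 2 volume + lpNorm Y.w 2 volume + lpNorm Y.h 2 volume := by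
  simp only [normF, nn_eq_lpNorm hz, nn_eq_lpNorm hU, nn_eq_lpNorm hH, nn_eq_lpNorm hv,
    nn_eq_lpNorm hw, nn_eq_lpNorm hh]

lemma El.sub_def (A B : El) :
    A - B = ⟨A.zeta - B.zeta, A.U - B.U, A.H - B.H, A.v - B.v, A.w - B.w, A.h - B.h⟩ := rfl

lemma abs_normF_sub_normF_le {A B : El} (hA : memF A) (hB : memF B) :
    |normF A - normF B| ≤ normF (A - B) := by
  obtain ⟨a1, a2, a3, a4, a5, a6, a7⟩ := memLp_of_memF hA
  obtain ⟨b1, b2, b3, b4, b5, b6, b7⟩ := memLp_of_memF hB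
  obtain ⟨mz, mU, mH, mv, mw, mh, -⟩ := hA
  obtain ⟨mz', mU', mH', mv', mw', mh', -⟩ := hB
  rw [El.sub_def, normF_eq_sum_lpNorm mz mU mH mv mw mh,
    normF_eq_sum_lpNorm mz' mU' mH' mv' mw' mh', normF_eq_sum_lpNorm (mz.sub mz') (mU.sub mU')
      (mH.sub mH') (mv.sub mv') (mw.sub mw') (mh.sub mh')]
  have e1 := abs_le.mp (abs_lpNorm_sub_lpNorm_le a1 b1 le_top)
  have e2 := abs_le.mp (abs_lpNorm_sub_lpNorm_le a2 b2 one_le_two)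
  have e3 := abs_le.mp (abs_lpNorm_sub_lpNorm_le a3 b3 le_top)
  have e4 := abs_le.mp (abs_lpNorm_sub_lpNorm_le a4 b4 le_top)
  have e5 := abs_le.mp (abs_lpNorm_sub_lpNorm_le a5 b5 one_le_two)
  have e6 := abs_le.mp (abs_lpNorm_sub_lpNorm_le a6 b6 one_le_two)
  have e7 := abs_le.mp (abs_lpNorm_sub_lpNorm_le a7 b7 one_le_two)
  rw [abs_le]
  constructor <;> linarith [e1.1, e2.1, e3.1, e4.1, e5.1, e6.1, e7.1, e1.2, e2.2, e3.2, e4.2,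
    e5.2, e6.2, e7.2]

lemma exists_forall_normF_le {ι : Type*} [TopologicalSpace ι] {K : Set ι} (hK : IsCompact K)
    {Ys : ι → El} (hmem : ∀ t ∈ K, memF (Ys t))
    (hcont : ∀ s ∈ K, Tendsto (fun t => normF (Ys t - Ys s)) (𝓝[K] s) (𝓝 0)) :
    ∃ M, ∀ t ∈ K, normF (Ys t) ≤ M := by
  have hcont' : ContinuousOn (fun t => normF (Ys t)) K := fun s hs =>
    tendsto_iff_norm_sub_tendsto_zero.2 <| squeeze_zero' (.of_forall fun _ => norm_nonneg _)
      (eventually_nhdsWithin_of_forall fun t ht => abs_normF_sub_normF_le (hmem t ht) (hmem s hs))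
      (hcont s hs)
  obtain ⟨M, hM⟩ := hK.bddAbove_image hcont'
  exact ⟨M, fun t ht => hM (mem_image_of_mem _ ht)⟩

section BoundedNorm

variable {Y : El} {M : ℝ}

lemma lpNorm_le_normF (hY : memF Y) :
    lpNorm Y.zeta ⊤ volume ≤ normF Y ∧ lpNorm Y.U ⊤ volume ≤ normF Y ∧
      lpNorm Y.U 2 volume ≤ normF Y ∧ lpNorm Y.v 2 volume ≤ normF Y ∧
      lpNorm Y.h 2 volume ≤ normF Y := by
  obtain ⟨mz, mU, mH, mv, mw, mh, -⟩ := hY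
  have h0 (f : ℝ → ℝ) (p : ℝ≥0∞) : 0 ≤ lpNorm f p volume := lpNorm_nonneg
  rw [normF_eq_sum_lpNorm mz mU mH mv mw mh]
  refine ⟨?_, ?_, ?_, ?_, ?_⟩ <;> linarith [h0 Y.zeta ⊤, h0 Y.U 2, h0 Y.U ⊤, h0 Y.H ⊤,
    h0 Y.v 2, h0 Y.w 2, h0 Y.h 2]

lemma ae_abs_zeta_le_and_abs_U_le (hY : memF Y) (hM : normF Y ≤ M) :
    ∀ᵐ ξ, |Y.zeta ξ| ≤ M ∧ |Y.U ξ| ≤ M := by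
  obtain ⟨hz, -, hU, -⟩ := memLp_of_memF hY
  obtain ⟨hz', hU', -⟩ := lpNorm_le_normF hY
  filter_upwards [ae_le_lpNorm_exponent_top hz, ae_le_lpNorm_exponent_top hU] with ξ hzξ hUξ
  exact ⟨hzξ.trans (hz'.trans hM), hUξ.trans (hU'.trans hM)⟩

lemma integral_sq_le_sq_normF (hY : memF Y) :
    ∫ ξ, Y.U ξ ^ 2 ≤ normF Y ^ 2 ∧ ∫ ξ, Y.v ξ ^ 2 ≤ normF Y ^ 2 ∧
      ∫ ξ, Y.h ξ ^ 2 ≤ normF Y ^ 2 := by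
  obtain ⟨-, hU, -, -, hv, -, hh⟩ := memLp_of_memF hY
  obtain ⟨-, -, hU', hv', hh'⟩ := lpNorm_le_normF hY
  rw [← lpNorm_two_sq hU.1, ← lpNorm_two_sq hv.1, ← lpNorm_two_sq hh.1]
  exact ⟨pow_le_pow_left₀ lpNorm_nonneg hU' 2, pow_le_pow_left₀ lpNorm_nonneg hv' 2,
    pow_le_pow_left₀ lpNorm_nonneg hh' 2⟩

end BoundedNorm

section PQBound

variable {γ M : ℝ} {Y : El}

noncomputable def kernelPQ (Y : El) (ξ η : ℝ) : ℝ := exp (-(sign (ξ - η)) * (Y.y ξ - Y.y η))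

lemma kernelPQ_le (Y : El) (ξ η : ℝ) :
    kernelPQ Y ξ η ≤ exp (|Y.zeta ξ| + |Y.zeta η|) * exp (-|ξ - η|) := by
  have hy : Y.y ξ - Y.y η = (ξ - η) + (Y.zeta ξ - Y.zeta η) := by simp only [El.y]; ring
  have h1 := abs_le.mp (abs_sub (Y.zeta ξ) (Y.zeta η))
  rw [kernelPQ, ← exp_add, exp_le_exp, hy]
  rcases lt_trichotomy (ξ - η) 0 with hd | hd | hd
  · rw [sign_of_neg hd, abs_of_neg hd]; linarith
  · rw [hd, sign_zero, abs_zero]; linarith [abs_nonneg (Y.zeta ξ), abs_nonneg (Y.zeta η)]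
  · rw [sign_of_pos hd, abs_of_pos hd]; linarith

lemma exp_neg_abs_mul_abs_le (d x : ℝ) : exp (-|d|) * |x| ≤ ((1 + d ^ 2)⁻¹ + x ^ 2) / 2 := by
  have hd : 1 + d ^ 2 ≤ exp (2 * |d|) := by
    nlinarith [quadratic_le_exp_of_nonneg (by positivity : 0 ≤ 2 * |d|), abs_nonneg d, sq_abs d]
  have hexp : exp (-|d|) ^ 2 ≤ (1 + d ^ 2)⁻¹ := by
    rw [show exp (-|d|) ^ 2 = (exp (2 * |d|))⁻¹ by rw [← exp_nat_mul, ← exp_neg]; ring_nf]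
    exact inv_anti₀ (by positivity) hd
  nlinarith [two_mul_le_add_sq (exp (-|d|)) |x|, sq_abs x]

-- The `(1 + (ξ - η)²)⁻¹` term absorbs `exp (-|ξ - η|) |h|` by AM-GM, as `h` is only in `L²`.
noncomputable def pqDom (γ M : ℝ) (Y : El) (ξ η : ℝ) : ℝ :=
  |(3 - 2 * γ) / 2| * ((1 + M / 2) * Y.U η ^ 2 + M / 2 * Y.v η ^ 2) +
    |γ / 2| / 2 * ((1 + (ξ - η) ^ 2)⁻¹ + Y.h η ^ 2)

lemma exp_neg_abs_mul_abs_integrandPQ_le {ξ η : ℝ} (hU : |Y.U η| ≤ M) :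
    exp (-|ξ - η|) * |integrandPQ γ Y η| ≤ pqDom γ M Y ξ η := by
  set e := exp (-|ξ - η|)
  have he1 : e ≤ 1 := exp_le_one_iff.2 (neg_nonpos.2 (abs_nonneg _))
  have hI : |integrandPQ γ Y η| ≤
      |(3 - 2 * γ) / 2| * (Y.U η ^ 2 * |Y.q η|) + |γ / 2| * |Y.h η| := by
    refine (abs_add_le _ _).trans (le_of_eq ?_)
    rw [abs_mul, abs_mul, abs_mul, abs_of_nonneg (sq_nonneg (Y.U η)), mul_assoc]
  have hUv : Y.U η ^ 2 * |Y.v η| ≤ M / 2 * (Y.U η ^ 2 + Y.v η ^ 2) := by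
    have hM : 0 ≤ M := (abs_nonneg _).trans hU
    have hUv2 := two_mul_le_add_sq |Y.U η| |Y.v η|
    rw [sq_abs, sq_abs] at hUv2
    calc Y.U η ^ 2 * |Y.v η| = |Y.U η| * (|Y.U η| * |Y.v η|) := by rw [← sq_abs]; ring
      _ ≤ M * (|Y.U η| * |Y.v η|) := by gcongr
      _ ≤ M / 2 * (Y.U η ^ 2 + Y.v η ^ 2) := by nlinarith
  have hq : e * (Y.U η ^ 2 * |Y.q η|) ≤ (1 + M / 2) * Y.U η ^ 2 + M / 2 * Y.v η ^ 2 :=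
    calc e * (Y.U η ^ 2 * |Y.q η|) ≤ Y.U η ^ 2 * |Y.q η| :=
          mul_le_of_le_one_left (by positivity) he1
      _ ≤ Y.U η ^ 2 * (1 + |Y.v η|) := by
          gcongr; exact (abs_add_le _ _).trans (by rw [abs_one])
      _ ≤ _ := by linarith
  calc e * |integrandPQ γ Y η|
      ≤ |(3 - 2 * γ) / 2| * (e * (Y.U η ^ 2 * |Y.q η|)) + |γ / 2| * (e * |Y.h η|) := by
        nlinarith [exp_pos (-|ξ - η|)]
    _ ≤ |(3 - 2 * γ) / 2| * ((1 + M / 2) * Y.U η ^ 2 + M / 2 * Y.v η ^ 2) +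
          |γ / 2| * (((1 + (ξ - η) ^ 2)⁻¹ + Y.h η ^ 2) / 2) := by
        gcongr
        exact exp_neg_abs_mul_abs_le _ _
    _ = pqDom γ M Y ξ η := by unfold pqDom; ring

lemma norm_kernelPQ_mul_integrandPQ_le {ξ η : ℝ} (hξ : |Y.zeta ξ| ≤ M) (hη : |Y.zeta η| ≤ M)
    (hU : |Y.U η| ≤ M) :
    ‖kernelPQ Y ξ η * integrandPQ γ Y η‖ ≤ exp (2 * M) * pqDom γ M Y ξ η := by
  have hk : 0 < kernelPQ Y ξ η := exp_pos _
  rw [norm_mul, Real.norm_eq_abs, Real.norm_eq_abs, abs_of_pos hk]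
  calc kernelPQ Y ξ η * |integrandPQ γ Y η|
      ≤ exp (|Y.zeta ξ| + |Y.zeta η|) * exp (-|ξ - η|) * |integrandPQ γ Y η| := by
        gcongr; exact kernelPQ_le Y ξ η
    _ ≤ exp (2 * M) * (exp (-|ξ - η|) * |integrandPQ γ Y η|) := by
        rw [mul_assoc]; gcongr; linarith
    _ ≤ exp (2 * M) * pqDom γ M Y ξ η := by
        gcongr; exact exp_neg_abs_mul_abs_integrandPQ_le hU

lemma integrable_pqDom (hY : memF Y) (ξ : ℝ) : Integrable (pqDom γ M Y ξ) := by
  obtain ⟨-, hU, -, -, hv, -, hh⟩ := memLp_of_memF hY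
  exact ((hU.integrable_sq.const_mul _).add (hv.integrable_sq.const_mul _)).const_mul _ |>.add
    (((integrable_inv_one_add_sq.comp_sub_left ξ).add hh.integrable_sq).const_mul _)

lemma integral_pqDom_le (hY : memF Y) (hM : normF Y ≤ M) (ξ : ℝ) :
    ∫ η, pqDom γ M Y ξ η ≤ |(3 - 2 * γ) / 2| * (1 + M) * M ^ 2 + |γ / 2| / 2 * (π + M ^ 2) := by
  obtain ⟨-, hU, -, -, hv, -, hh⟩ := memLp_of_memF hY
  have hUi := hU.integrable_sq
  have hvi := hv.integrable_sq
  have hhi := hh.integrable_sq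
  have hk := integrable_inv_one_add_sq.comp_sub_left ξ
  obtain ⟨hU2, hv2, hh2⟩ := integral_sq_le_sq_normF hY
  have hF : 0 ≤ normF Y := lpNorm_nonneg.trans (lpNorm_le_normF hY).1
  have hFM : normF Y ^ 2 ≤ M ^ 2 := pow_le_pow_left₀ hF hM 2
  have hker : ∫ η, (1 + (ξ - η) ^ 2)⁻¹ = π :=
    (integral_sub_left_eq_self (fun x => (1 + x ^ 2)⁻¹) volume ξ).trans
      integral_univ_inv_one_add_sq
  unfold pqDom
  rw [integral_add, integral_const_mul, integral_const_mul, integral_add, integral_add,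
    integral_const_mul, integral_const_mul, hker]
  · have hM0 : 0 ≤ M := hF.trans hM
    calc _ ≤ |(3 - 2 * γ) / 2| * ((1 + M / 2) * M ^ 2 + M / 2 * M ^ 2) +
          |γ / 2| / 2 * (π + M ^ 2) := by
          gcongr
          exacts [hU2.trans hFM, hv2.trans hFM, hh2.trans hFM]
      _ = _ := by ring
  exacts [hk, hhi, hUi.const_mul _, hvi.const_mul _,
    ((hUi.const_mul _).add (hvi.const_mul _)).const_mul _, (hk.add hhi).const_mul _]


noncomputable def pqBound (γ M : ℝ) : ℝ :=
  exp (2 * M) / 2 * (|(3 - 2 * γ) / 2| * (1 + M) * M ^ 2 + |γ / 2| / 2 * (π + M ^ 2))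

lemma abs_Pmap_le_and_abs_Qmap_le (hY : memF Y) (hM : normF Y ≤ M) {ξ : ℝ}
    (hξ : |Y.zeta ξ| ≤ M) : |Pmap γ Y ξ| ≤ pqBound γ M ∧ |Qmap γ Y ξ| ≤ pqBound γ M := by
  have hdom : ∀ᵐ η, ‖kernelPQ Y ξ η * integrandPQ γ Y η‖ ≤ exp (2 * M) * pqDom γ M Y ξ η := by
    filter_upwards [ae_abs_zeta_le_and_abs_U_le hY hM] with η hη
    exact norm_kernelPQ_mul_integrandPQ_le hξ hη.1 hη.2
  have hdom' : ∀ᵐ η, ‖sign (ξ - η) * kernelPQ Y ξ η * integrandPQ γ Y η‖ ≤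
      exp (2 * M) * pqDom γ M Y ξ η := by
    filter_upwards [hdom] with η hη
    rw [mul_assoc, norm_mul]
    have hs : |sign (ξ - η)| ≤ 1 := by rcases sign_apply_eq (ξ - η) with h | h | h <;> simp [h]
    exact (mul_le_of_le_one_left (norm_nonneg _) hs).trans hη
  have hint : ∫ η, exp (2 * M) * pqDom γ M Y ξ η ≤ 2 * pqBound γ M := by
    rw [integral_const_mul, pqBound]
    have := integral_pqDom_le (γ := γ) hY hM ξ
    nlinarith [exp_pos (2 * M)]
  have hgi := (integrable_pqDom (γ := γ) (M := M) hY ξ).const_mul (exp (2 * M))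
  constructor
  · change |1 / 2 * ∫ η, kernelPQ Y ξ η * integrandPQ γ Y η| ≤ _
    rw [abs_mul, abs_of_pos (by norm_num : (0 : ℝ) < 1 / 2)]
    have := norm_integral_le_of_norm_le hgi hdom
    rw [Real.norm_eq_abs] at this
    linarith
  · change |-(1 / 2) * ∫ η, sign (ξ - η) * kernelPQ Y ξ η * integrandPQ γ Y η| ≤ _
    rw [abs_mul, abs_neg, abs_of_pos (by norm_num : (0 : ℝ) < 1 / 2)]
    have := norm_integral_le_of_norm_le hgi hdom'
    rw [Real.norm_eq_abs] at this
    linarith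

end PQBound

lemma nonneg_and_nonneg_of_mul_nonneg_of_add_pos {a b : ℝ} (hab : 0 ≤ a * b) (hsum : 0 < a + b) :
    0 ≤ a ∧ 0 ≤ b := by
  constructor <;> nlinarith

lemma abs_deriv_q_add_h_le {γ U q w h P Q : ℝ} (hid : q * h = U ^ 2 * q ^ 2 + w ^ 2) :
    |γ * w + (-2 * Q * U * q + (3 * U ^ 2 - 2 * P) * w)|
      ≤ (|γ| + 3 * U ^ 2 + 2 * |P| + 2 * |Q|) / 2 * |q + h| := by
  -- `(q + h)² - 4qh = (q - h)²`, and `qh` dominates both `w²` and `(Uq)²`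
  have hw : |2 * w| ≤ |q + h| := sq_le_sq.mp (by nlinarith [sq_nonneg (q - h), sq_nonneg (U * q)])
  have hUq : |2 * (U * q)| ≤ |q + h| := sq_le_sq.mp (by nlinarith [sq_nonneg (q - h), sq_nonneg w])
  have hcoef : |γ + 3 * U ^ 2 - 2 * P| ≤ |γ| + 3 * U ^ 2 + 2 * |P| := by
    have h1 := abs_sub (γ + 3 * U ^ 2) (2 * P)
    have h2 := abs_add_le γ (3 * U ^ 2)
    rw [abs_mul, abs_two] at h1
    rw [abs_of_nonneg (by positivity : (0 : ℝ) ≤ 3 * U ^ 2)] at h2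
    linarith
  rw [abs_mul, abs_two] at hw hUq
  calc |γ * w + (-2 * Q * U * q + (3 * U ^ 2 - 2 * P) * w)|
      = |(γ + 3 * U ^ 2 - 2 * P) * w - 2 * Q * (U * q)| := by ring_nf
    _ ≤ |γ + 3 * U ^ 2 - 2 * P| * |w| + 2 * |Q| * |U * q| := by
        refine (abs_sub _ _).trans (le_of_eq ?_)
        rw [abs_mul, abs_mul, abs_mul, abs_two]
    _ ≤ (|γ| + 3 * U ^ 2 + 2 * |P|) * (|q + h| / 2) + 2 * |Q| * (|q + h| / 2) := by
        gcongr <;> linarith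
    _ = _ := by ring

lemma exp_neg_mul_le_of_abs_deriv_le {T C : ℝ} {g g' : ℝ → ℝ}
    (hg : ∀ t ∈ Icc 0 T, HasDerivWithinAt g (g' t) (Icc 0 T) t)
    (hbound : ∀ t ∈ Icc 0 T, |g' t| ≤ C * |g t|) (hg0 : 0 < g 0) :
    ∀ t ∈ Icc 0 T, exp (-C * t) * g 0 ≤ g t := by
  have hcont : ContinuousOn g (Icc 0 T) := fun t ht => (hg t ht).continuousWithinAt
  -- `exp (2Ct) g²` is nondecreasing, because `g g' ≥ -C g²`
  have hmono : MonotoneOn (fun t => exp (2 * C * t) * g t ^ 2) (Icc 0 T) := by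
    refine monotoneOn_of_hasDerivWithinAt_nonneg (convex_Icc 0 T)
      (f' := fun t => exp (2 * C * t) * (2 * C) * g t ^ 2 + exp (2 * C * t) * (2 * g t * g' t))
      ((continuous_const.mul continuous_id).rexp.continuousOn.mul (hcont.pow 2))
      (fun t ht => ?_) (fun t ht => ?_)
    · have ht' := interior_subset ht
      refine ((((hasDerivAt_id' t).const_mul (2 * C)).exp.hasDerivWithinAt.mul
        ((hg t ht').pow 2)).mono interior_subset).congr_deriv ?_
      simp only [Pi.pow_apply]
      ring
    · have ht' := interior_subset ht
      have hgg' : -(C * g t ^ 2) ≤ g t * g' t := by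
        have h1 := mul_le_mul_of_nonneg_left (hbound t ht') (abs_nonneg (g t))
        have h2 := neg_abs_le (g t * g' t)
        rw [abs_mul] at h2
        have h3 : |g t| * (C * |g t|) = C * g t ^ 2 := by rw [← sq_abs]; ring
        linarith
      nlinarith [exp_pos (2 * C * t)]
  have hsq : ∀ t ∈ Icc 0 T, (exp (-C * t) * g 0) ^ 2 ≤ g t ^ 2 := by
    intro t ht
    have := hmono ⟨le_rfl, ht.1.trans ht.2⟩ ht ht.1
    simp only [mul_zero, exp_zero, one_mul] at this
    calc (exp (-C * t) * g 0) ^ 2 = exp (-(2 * C * t)) * g 0 ^ 2 := by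
          rw [mul_pow, ← exp_nat_mul]; ring_nf
      _ ≤ exp (-(2 * C * t)) * (exp (2 * C * t) * g t ^ 2) := by gcongr
      _ = g t ^ 2 := by rw [← mul_assoc, ← exp_add]; simp
  -- so `g` never vanishes, and stays positive by the intermediate value theorem
  have hpos : ∀ t ∈ Icc 0 T, 0 < g t := by
    intro t ht
    by_contra hneg
    obtain ⟨s, hs, hgs⟩ := intermediate_value_Icc' ht.1
      (hcont.mono (Icc_subset_Icc le_rfl ht.2)) ⟨not_lt.mp hneg, hg0.le⟩
    have := hsq s ⟨hs.1, hs.2.trans ht.2⟩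
    rw [hgs] at this
    nlinarith [mul_pos (exp_pos (-C * s)) hg0]
  intro t ht
  exact abs_le_of_sq_le_sq' (hsq t ht) (hpos t ht).le |>.2

section ScalarSystem

variable {γ T : ℝ} {U q w h P Q : ℝ → ℝ}

lemma mul_eq_sq_add_sq_of_hasDerivWithinAt
    (hU : ∀ t ∈ Icc 0 T, HasDerivWithinAt U (-Q t) (Icc 0 T) t)
    (hq : ∀ t ∈ Icc 0 T, HasDerivWithinAt q (γ * w t) (Icc 0 T) t)
    (hw : ∀ t ∈ Icc 0 T, HasDerivWithinAt w
      (γ / 2 * h t + ((3 - 2 * γ) / 2 * U t ^ 2 - P t) * q t) (Icc 0 T) t)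
    (hh : ∀ t ∈ Icc 0 T, HasDerivWithinAt h
      (-2 * Q t * U t * q t + (3 * U t ^ 2 - 2 * P t) * w t) (Icc 0 T) t)
    (hid0 : q 0 * h 0 = U 0 ^ 2 * q 0 ^ 2 + w 0 ^ 2) :
    ∀ t ∈ Icc 0 T, q t * h t = U t ^ 2 * q t ^ 2 + w t ^ 2 := by
  set k : ℝ → ℝ := fun t => q t * h t - U t ^ 2 * q t ^ 2 - w t ^ 2
  have hk : ∀ t ∈ Icc 0 T, HasDerivWithinAt k 0 (Icc 0 T) t := fun t ht =>
    ((((hq t ht).mul (hh t ht)).sub (((hU t ht).pow 2).mul ((hq t ht).pow 2))).sub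
      ((hw t ht).pow 2)).congr_deriv (by simp only [Pi.pow_apply]; ring)
  have hconst := constant_of_has_deriv_right_zero (fun t ht => (hk t ht).continuousWithinAt)
    fun t ht => (hk t (Ico_subset_Icc_self ht)).mono_of_mem_nhdsWithin (Icc_mem_nhdsGE_of_mem ht)
  intro t ht
  have := hconst t ht
  simp only [k] at this
  linarith

lemma invariants_of_hasDerivWithinAt {C : ℝ}
    (hU : ∀ t ∈ Icc 0 T, HasDerivWithinAt U (-Q t) (Icc 0 T) t)
    (hq : ∀ t ∈ Icc 0 T, HasDerivWithinAt q (γ * w t) (Icc 0 T) t)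
    (hw : ∀ t ∈ Icc 0 T, HasDerivWithinAt w
      (γ / 2 * h t + ((3 - 2 * γ) / 2 * U t ^ 2 - P t) * q t) (Icc 0 T) t)
    (hh : ∀ t ∈ Icc 0 T, HasDerivWithinAt h
      (-2 * Q t * U t * q t + (3 * U t ^ 2 - 2 * P t) * w t) (Icc 0 T) t)
    (hC : ∀ t ∈ Icc 0 T, |γ| + 3 * U t ^ 2 + 2 * |P t| + 2 * |Q t| ≤ 2 * C)
    (hid0 : q 0 * h 0 = U 0 ^ 2 * q 0 ^ 2 + w 0 ^ 2) (hpos0 : 0 < q 0 + h 0) :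
    ∀ t ∈ Icc 0 T, q t * h t = U t ^ 2 * q t ^ 2 + w t ^ 2 ∧ 0 ≤ q t ∧ 0 ≤ h t ∧
      exp (-C * t) * (q 0 + h 0) ≤ q t + h t := by
  have hid := mul_eq_sq_add_sq_of_hasDerivWithinAt hU hq hw hh hid0
  have hlow := exp_neg_mul_le_of_abs_deriv_le (C := C) (g := fun t => q t + h t)
    (fun t ht => (hq t ht).add (hh t ht))
    (fun t ht => (abs_deriv_q_add_h_le (hid t ht)).trans (by gcongr; linarith [hC t ht]))
    hpos0
  intro t ht
  have hpos : 0 < q t + h t := lt_of_lt_of_le (by positivity) (hlow t ht)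
  have hqh : 0 ≤ q t * h t := by rw [hid t ht]; positivity
  obtain ⟨hq_nonneg, hh_nonneg⟩ := nonneg_and_nonneg_of_mul_nonneg_of_add_pos hqh hpos
  exact ⟨hid t ht, hq_nonneg, hh_nonneg, hlow t ht⟩

end ScalarSystem

lemma ae_forall_abs_zeta_le_and_abs_U_le {Gf : El → El} {Ys : ℝ → El} {T M : ℝ}
    (hsol : IsSolutionOn Gf Ys T) (hM : ∀ t ∈ Icc 0 T, normF (Ys t) ≤ M) :
    ∀ᵐ ξ, ∀ t ∈ Icc 0 T, |(Ys t).zeta ξ| ≤ M ∧ |(Ys t).U ξ| ≤ M := by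
  have hF : IsClosed {p : ℝ × ℝ | |p.1| ≤ M ∧ |p.2| ≤ M} := by
    rw [ofPred_and]
    exact (isClosed_le (by fun_prop) continuous_const).inter
      (isClosed_le (by fun_prop) continuous_const)
  exact ae_forall_mem_of_continuousOn (f := fun t ξ => ((Ys t).zeta ξ, (Ys t).U ξ)) hF
    (fun ξ => ContinuousOn.prodMk (fun t ht => (hsol.2.1 t ht ξ).1.continuousWithinAt)
      (fun t ht => (hsol.2.1 t ht ξ).2.1.continuousWithinAt))
    (fun t ht => ae_abs_zeta_le_and_abs_U_le (hsol.1 t ht) (hM t ht))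

theorem stmt5_general (γ T c : ℝ) (hc : 0 < c) (Y₀ : El) (Ys : ℝ → El)
    (hid : ∀ᵐ ξ : ℝ ∂volume,
      Y₀.q ξ * Y₀.h ξ = (Y₀.U ξ) ^ 2 * (Y₀.q ξ) ^ 2 + (Y₀.w ξ) ^ 2 ∧
      0 ≤ Y₀.q ξ ∧ 0 ≤ Y₀.h ξ ∧ c ≤ Y₀.q ξ + Y₀.h ξ)
    (hsol : IsSolutionOn (Gmap γ) Ys T) (h0 : Ys 0 = Y₀) :
    ∃ C : ℝ, 0 < Real.exp (-C * T) * c ∧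
      ∀ t ∈ Icc (0 : ℝ) T, ∀ᵐ ξ : ℝ ∂volume,
        (Ys t).q ξ * (Ys t).h ξ
          = ((Ys t).U ξ) ^ 2 * ((Ys t).q ξ) ^ 2 + ((Ys t).w ξ) ^ 2 ∧
        0 ≤ (Ys t).q ξ ∧ 0 ≤ (Ys t).h ξ ∧
        Real.exp (-C * t) * (Y₀.q ξ + Y₀.h ξ) ≤ (Ys t).q ξ + (Ys t).h ξ ∧
        Real.exp (-C * T) * c ≤ Real.exp (-C * t) * (Y₀.q ξ + Y₀.h ξ) := by
  obtain ⟨M₀, hM₀⟩ := exists_forall_normF_le isCompact_Icc hsol.1 hsol.2.2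
  set M := max M₀ 0
  have hM (t) (ht : t ∈ Icc 0 T) : normF (Ys t) ≤ M := (hM₀ t ht).trans (le_max_left _ _)
  have hbd := ae_forall_abs_zeta_le_and_abs_U_le hsol hM
  obtain ⟨hmem, hderiv, -⟩ := hsol
  set C := (|γ| + 3 * M ^ 2 + 4 * pqBound γ M) / 2 with hC
  have hC0 : 0 ≤ C := by unfold C pqBound; positivity
  refine ⟨C, mul_pos (exp_pos _) hc, fun t ht => ?_⟩
  filter_upwards [hbd, hid] with ξ hξ ⟨hid0, _, _, hc0⟩
  have hcoef (s) (hs : s ∈ Icc 0 T) : |γ| + 3 * (Ys s).U ξ ^ 2 + 2 * |Pmap γ (Ys s) ξ| +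
      2 * |Qmap γ (Ys s) ξ| ≤ 2 * C := by
    obtain ⟨hP, hQ⟩ := abs_Pmap_le_and_abs_Qmap_le (γ := γ) (hmem s hs) (hM s hs) (hξ s hs).1
    have hU : (Ys s).U ξ ^ 2 ≤ M ^ 2 := sq_le_sq.2 ((hξ s hs).2.trans (le_abs_self M))
    linarith
  obtain ⟨hidt, hqt, hht, hlow⟩ := invariants_of_hasDerivWithinAt (C := C)
    (U := fun s => (Ys s).U ξ) (q := fun s => (Ys s).q ξ) (w := fun s => (Ys s).w ξ)
    (h := fun s => (Ys s).h ξ) (fun s hs => (hderiv s hs ξ).2.1)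
    (fun s hs => (hderiv s hs ξ).2.2.2.1.const_add 1) (fun s hs => (hderiv s hs ξ).2.2.2.2.1)
    (fun s hs => (hderiv s hs ξ).2.2.2.2.2) hcoef (h0 ▸ hid0) (h0 ▸ by linarith) t ht
  refine ⟨hidt, hqt, hht, h0 ▸ hlow, ?_⟩
  calc exp (-C * T) * c ≤ exp (-C * t) * c :=
        mul_le_mul_of_nonneg_right (exp_le_exp.2 (by nlinarith [ht.2])) hc.le
    _ ≤ exp (-C * t) * (Y₀.q ξ + Y₀.h ξ) := by gcongr

/-- propagation of the identity `qh = U²q² + w²`, of positivity of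
`q` and `h`, and the exponential lower bound on `q + h`. -/
theorem stmt5 (γ T c : ℝ) (hT : 0 ≤ T) (hc : 0 < c) (Y₀ : El) (Ys : ℝ → El)
    (hmem : memF Y₀)
    (hq : eLpNorm Y₀.q ⊤ volume < ⊤) (hw : eLpNorm Y₀.w ⊤ volume < ⊤)
    (hh : eLpNorm Y₀.h ⊤ volume < ⊤)
    (hid : ∀ᵐ ξ : ℝ ∂volume,
      Y₀.q ξ * Y₀.h ξ = (Y₀.U ξ) ^ 2 * (Y₀.q ξ) ^ 2 + (Y₀.w ξ) ^ 2 ∧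
      0 ≤ Y₀.q ξ ∧ 0 ≤ Y₀.h ξ ∧ c ≤ Y₀.q ξ + Y₀.h ξ)
    (hsol : IsSolutionOn (Gmap γ) Ys T) (h0 : Ys 0 = Y₀) :
    ∃ C : ℝ, 0 < Real.exp (-C * T) * c ∧
      ∀ t ∈ Icc (0 : ℝ) T, ∀ᵐ ξ : ℝ ∂volume,
        (Ys t).q ξ * (Ys t).h ξ
          = ((Ys t).U ξ) ^ 2 * ((Ys t).q ξ) ^ 2 + ((Ys t).w ξ) ^ 2 ∧
        0 ≤ (Ys t).q ξ ∧ 0 ≤ (Ys t).h ξ ∧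
        Real.exp (-C * t) * (Y₀.q ξ + Y₀.h ξ) ≤ (Ys t).q ξ + (Ys t).h ξ ∧
        Real.exp (-C * T) * c ≤ Real.exp (-C * t) * (Y₀.q ξ + Y₀.h ξ) :=
  stmt5_general γ T c hc Y₀ Ys hid hsol h0
end

section
/- Let n, s ≥ 1, f : ℝⁿ → ℝⁿ, and let D : ℝⁿ → (real symmetric n×n matrices) and d : ℝⁿ → ℝⁿ satisfy the invariance D(y + t f(z)) = D(y) and d(y + t f(z)) = d(y) for all y, z ∈ ℝⁿ and t ∈ ℝ. Define I(y) = yᵀD(y)y + d(y)ᵀy and assume that 2 yᵀD(y)f(y) + d(y)ᵀf(y) = 0 for all y ∈ ℝⁿ (so I is a first integral of y' = f(y)). Let (a_{ij})_{1≤i,j≤s} and (b_i)_{1≤i≤s} be real Runge–Kutta coefficients satisfying b_i a_{ij} + b_j a_{ji} = b_i b_j for all i, j. Suppose h ∈ ℝ, y₀ ∈ ℝⁿ and K₁, …, K_s ∈ ℝⁿ satisfy the stage equations K_i = f(y₀ + h Σ_{j=1}^s a_{ij} K_j) for i = 1, …, s, and set y₁ = y₀ + h Σ_{i=1}^s b_i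 K_i. Then I(y₁) = I(y₀). -/
open MeasureTheory Real Filter Set
open scoped ENNReal NNReal Topology

/-!
The coefficients `D` and `d` are invariant under translations by the values of `f`, hence
constant on `y₀ + span {Kᵢ}`, where all stage points `Yᵢ` and `y₁` lie. On one step the invariant
is therefore the fixed quadratic `Q(y) = yᵀCy + eᵀy` with `C = D y₀`, `e = d y₀`, and the
hypothesis on `f` at the stage points reads `2 YᵢᵀCKᵢ + eᵀKᵢ = 0`. Cooper's argument for
quadratic invariants then applies: in `Q(y₁) - Q(y₀)` the linear part contributes
`-2h² Σᵢⱼ bᵢaᵢⱼ KⱼᵀCKᵢ` and the quadratic part `h² Σᵢⱼ bᵢbⱼ KⱼᵀCKᵢ`, and these cancel since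
`Σᵢⱼ bᵢbⱼ KⱼᵀCKᵢ = 2 Σᵢⱼ bᵢaᵢⱼ KⱼᵀCKᵢ` by the symmetry of `C` and `bᵢaᵢⱼ + bⱼaⱼᵢ = bᵢbⱼ`.
-/

open Finset

theorem sum_sum_mul_mul_eq_two_mul_of_symplectic {R ι : Type*} [CommSemiring R] [Fintype ι]
    {a : ι → ι → R} {b : ι → R} (hab : ∀ i j, b i * a i j + b j * a j i = b i * b j)
    {G : ι → ι → R} (hG : ∀ i j, G i j = G j i) :
    ∑ i, ∑ j, b i * b j * G i j = 2 * ∑ i, ∑ j, b i * a i j * G i j := by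
  have hswap : ∑ i, ∑ j, b j * a j i * G i j = ∑ i, ∑ j, b i * a i j * G i j := by
    rw [sum_comm]; simp_rw [hG]
  calc ∑ i, ∑ j, b i * b j * G i j
      = ∑ i, ∑ j, (b i * a i j * G i j + b j * a j i * G i j) := by
        simp_rw [← hab]; simp only [add_mul]
    _ = 2 * ∑ i, ∑ j, b i * a i j * G i j := by
        simp only [sum_add_distrib, hswap]; ring

theorem apply_add_eq_of_mem_span {R V X : Type*} [Semiring R] [AddCommMonoid V] [Module R V]
    {g : V → X} {S : Set V} (hg : ∀ y, ∀ v ∈ S, ∀ t : R, g (y + t • v) = g y)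
    {u : V} (hu : u ∈ Submodule.span R S) (y : V) : g (y + u) = g y := by
  suffices ∀ (c : R) y, g (y + c • u) = g y by simpa using this 1 y
  induction hu using Submodule.span_induction with
  | mem v hv => exact fun c y => hg y v hv c
  | zero => simp
  | add u₁ u₂ _ _ h₁ h₂ => intro c y; rw [smul_add, ← add_assoc, h₂, h₁]
  | smul r u _ hu => intro c y; rw [smul_smul, hu]

theorem rungeKutta_step_quadratic_invariant {R V ι : Type*} [CommRing R] [AddCommGroup V]
    [Module R V] [Fintype ι] {B : LinearMap.BilinForm R V} (hB : B.IsSymm) (ℓ : V →ₗ[R] R)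
    {a : ι → ι → R} {b : ι → R} (hab : ∀ i j, b i * a i j + b j * a j i = b i * b j) (h : R) (y₀ : V) (K : ι → V)
    (hstage : ∀ i, 2 * B (y₀ + h • ∑ j, a i j • K j) (K i) + ℓ (K i) = 0) :
    B (y₀ + h • ∑ i, b i • K i) (y₀ + h • ∑ i, b i • K i) + ℓ (y₀ + h • ∑ i, b i • K i) =
      B y₀ y₀ + ℓ y₀ := by
  set S := ∑ i, ∑ j, b i * a i j * B (K j) (K i)
  have hstage_y₀ : ∀ i, 2 * B y₀ (K i) + ℓ (K i) = -2 * h * ∑ j, a i j * B (K j) (K i) := by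
    intro i
    have := hstage i
    simp only [map_add, LinearMap.add_apply, map_smul, map_sum, LinearMap.smul_apply,
      LinearMap.sum_apply, smul_eq_mul] at this
    linear_combination this
  have hlin : 2 * B y₀ (h • ∑ i, b i • K i) + ℓ (h • ∑ i, b i • K i) = -2 * h ^ 2 * S := by
    calc _ = h * ∑ i, b i * (2 * B y₀ (K i) + ℓ (K i)) := by
          simp only [map_smul, map_sum, smul_eq_mul, mul_add, sum_add_distrib, mul_sum]
          ring_nf
      _ = -2 * h ^ 2 * S := by
          simp only [hstage_y₀, S, mul_sum]
          ring_nf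
  have hquad : B (h • ∑ i, b i • K i) (h • ∑ i, b i • K i) = 2 * h ^ 2 * S := by
    calc _ = h ^ 2 * ∑ i, ∑ j, b i * b j * B (K j) (K i) := by
          simp only [map_smul, map_sum, LinearMap.smul_apply, LinearMap.sum_apply, smul_eq_mul,
            mul_sum]
          ring_nf
      _ = 2 * h ^ 2 * S := by
          rw [sum_sum_mul_mul_eq_two_mul_of_symplectic hab (G := fun i j => B (K j) (K i))
            fun i j => hB.eq _ _]
          ring
  simp only [map_add, LinearMap.add_apply]
  rw [hB.eq (h • _) y₀]
  linear_combination hlin + hquad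

open Matrix in
theorem stmt16_general (n s : ℕ)
    (f : (Fin n → ℝ) → (Fin n → ℝ))
    (D : (Fin n → ℝ) → Matrix (Fin n) (Fin n) ℝ)
    (d : (Fin n → ℝ) → (Fin n → ℝ))
    (hsymm : ∀ y : Fin n → ℝ, (D y).IsSymm)
    (hDinv : ∀ (y z : Fin n → ℝ) (t : ℝ), D (y + t • f z) = D y)
    (hdinv : ∀ (y z : Fin n → ℝ) (t : ℝ), d (y + t • f z) = d y)
    (hint : ∀ y : Fin n → ℝ,
      2 * (y ⬝ᵥ (D y).mulVec (f y)) + d y ⬝ᵥ f y = 0)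
    (a : Fin s → Fin s → ℝ) (b : Fin s → ℝ)
    (hab : ∀ i j : Fin s, b i * a i j + b j * a j i = b i * b j)
    (h : ℝ) (y₀ : Fin n → ℝ) (K : Fin s → (Fin n → ℝ))
    (hK : ∀ i : Fin s, K i = f (y₀ + h • ∑ j : Fin s, a i j • K j)) :
    (y₀ + h • ∑ i : Fin s, b i • K i) ⬝ᵥ
        (D (y₀ + h • ∑ i : Fin s, b i • K i)).mulVec
          (y₀ + h • ∑ i : Fin s, b i • K i) +
      d (y₀ + h • ∑ i : Fin s, b i • K i) ⬝ᵥ (y₀ + h • ∑ i : Fin s, b i • K i)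
      = y₀ ⬝ᵥ (D y₀).mulVec y₀ + d y₀ ⬝ᵥ y₀ := by
  have hspan : ∀ c : Fin s → ℝ, h • ∑ j, c j • K j ∈ Submodule.span ℝ (Set.range K) := fun c =>
    Submodule.smul_mem _ h <| Submodule.sum_smul_mem _ c fun j _ =>
      Submodule.subset_span (Set.mem_range_self j)
  have hcoeff : ∀ c : Fin s → ℝ,
      (D (y₀ + h • ∑ j, c j • K j), d (y₀ + h • ∑ j, c j • K j)) = (D y₀, d y₀) := by
    refine fun c => apply_add_eq_of_mem_span (g := fun y => (D y, d y)) ?_ (hspan c) y₀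
    rintro y _ ⟨j, rfl⟩ t
    rw [hK j, hDinv, hdinv]
  have hD : ∀ c : Fin s → ℝ, D (y₀ + h • ∑ j, c j • K j) = D y₀ := fun c =>
    congrArg Prod.fst (hcoeff c)
  have hd : ∀ c : Fin s → ℝ, d (y₀ + h • ∑ j, c j • K j) = d y₀ := fun c =>
    congrArg Prod.snd (hcoeff c)
  have hstage : ∀ i, 2 * (y₀ + h • ∑ j, a i j • K j) ⬝ᵥ D y₀ *ᵥ K i + d y₀ ⬝ᵥ K i = 0 := by
    intro i
    simpa only [hD, hd, ← hK i] using hint (y₀ + h • ∑ j, a i j • K j)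
  have key := rungeKutta_step_quadratic_invariant (isSymm_toBilin'_iff_isSymm.2 (hsymm y₀))
    (dotProductBilin ℝ ℝ (d y₀)) hab h y₀ K
  simp only [toBilin'_apply', dotProductBilin_apply_apply] at key
  rw [hD, hd]
  exact key hstage

open Matrix in
/-- a Runge–Kutta scheme whose coefficients satisfy
`bᵢaᵢⱼ + bⱼaⱼᵢ = bᵢbⱼ` conserves the invariant `I(y) = yᵀD(y)y + d(y)ᵀy`. -/
theorem stmt16 (n s : ℕ) (hn : 1 ≤ n) (hs : 1 ≤ s)
    (f : (Fin n → ℝ) → (Fin n → ℝ))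
    (D : (Fin n → ℝ) → Matrix (Fin n) (Fin n) ℝ)
    (d : (Fin n → ℝ) → (Fin n → ℝ))
    (hsymm : ∀ y : Fin n → ℝ, (D y).IsSymm)
    (hDinv : ∀ (y z : Fin n → ℝ) (t : ℝ), D (y + t • f z) = D y)
    (hdinv : ∀ (y z : Fin n → ℝ) (t : ℝ), d (y + t • f z) = d y)
    (hint : ∀ y : Fin n → ℝ,
      2 * (y ⬝ᵥ (D y).mulVec (f y)) + d y ⬝ᵥ f y = 0)
    (a : Fin s → Fin s → ℝ) (b : Fin s → ℝ)
    (hab : ∀ i j : Fin s, b i * a i j + b j * a j i = b i * b j)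
    (h : ℝ) (y₀ : Fin n → ℝ) (K : Fin s → (Fin n → ℝ))
    (hK : ∀ i : Fin s, K i = f (y₀ + h • ∑ j : Fin s, a i j • K j)) :
    (y₀ + h • ∑ i : Fin s, b i • K i) ⬝ᵥ
        (D (y₀ + h • ∑ i : Fin s, b i • K i)).mulVec
          (y₀ + h • ∑ i : Fin s, b i • K i) +
      d (y₀ + h • ∑ i : Fin s, b i • K i) ⬝ᵥ (y₀ + h • ∑ i : Fin s, b i • K i)
      = y₀ ⬝ᵥ (D y₀).mulVec y₀ + d y₀ ⬝ᵥ y₀ :=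
  stmt16_general n s f D d hsymm hDinv hdinv hint a b hab h y₀ K hK
end

section
/- Let I = [a,b] be a compact interval with a < b and let q, w, h, U : I → ℝ be measurable functions such that q ≥ 0, h ≥ 0, q + h = 1 almost everywhere, qh = q²U² + w² almost everywhere, and ∫_I q² dξ > 0. Define the averages q̄ = (1/(b−a))∫_I q dξ, w̄ = (1/(b−a))∫_I w dξ, h̄ = (1/(b−a))∫_I h dξ, and the weighted average Ū = (∫_I q²U dξ)/(∫_I q² dξ). Then q̄ + h̄ = 1 and q̄ h̄ ≥ Ū²q̄² + w̄². -/
open MeasureTheory Real Filter Set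
open scoped ENNReal NNReal Topology

/-!
Multiply through by `L² = (b - a)²`. Cauchy–Schwarz on the cell gives
`(∫ q² U)² (∫ q)² ≤ (∫ q²)(∫ q² U²) · L ∫ q²` and `(∫ w)² ≤ L ∫ w²`, so the left side is at most
`L (∫ q² U² + ∫ w²)`. Integrating the constraint `q (1 - q) = q h = q² U² + w²` turns this into
`L (∫ q - ∫ q²)`, and one more Cauchy–Schwarz, `(∫ q)² ≤ L ∫ q²`, bounds it by
`(∫ q)(L - ∫ q) = (∫ q)(∫ h)`.
-/

theorem abs_le_one_of_mul_eq_sq_add_sq {q h w U : ℝ} (hq : 0 ≤ q) (hh : 0 ≤ h) (hqh : q + h = 1)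
    (hqhw : q * h = q ^ 2 * U ^ 2 + w ^ 2) : |q| ≤ 1 ∧ |h| ≤ 1 ∧ |w| ≤ 1 ∧ |q * U| ≤ 1 := by
  have hqh_le_one : q * h ≤ 1 := by nlinarith
  refine ⟨abs_le.2 ⟨by linarith, by linarith⟩, abs_le.2 ⟨by linarith, by linarith⟩, ?_, ?_⟩
  · exact abs_le_one_iff_mul_self_le_one.2 (by nlinarith [sq_nonneg (q * U)])
  · exact abs_le_one_iff_mul_self_le_one.2 (by nlinarith [sq_nonneg w])

namespace MeasureTheory

variable {α : Type*} {m : MeasurableSpace α} {μ : Measure α}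

theorem sq_integral_mul_le_integral_sq_mul_integral_sq {f g : α → ℝ}
    (hf : Integrable (fun x => f x ^ 2) μ) (hg : Integrable (fun x => g x ^ 2) μ)
    (hfg : Integrable (fun x => f x * g x) μ) :
    (∫ x, f x * g x ∂μ) ^ 2 ≤ (∫ x, f x ^ 2 ∂μ) * ∫ x, g x ^ 2 ∂μ := by
  have quadratic_nonneg (t : ℝ) : 0 ≤ (∫ x, f x ^ 2 ∂μ) * (t * t) +
      (2 * ∫ x, f x * g x ∂μ) * t + ∫ x, g x ^ 2 ∂μ := by
    have hft : Integrable (fun x => f x ^ 2 * (t * t) + 2 * (f x * g x) * t) μ :=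
      (hf.mul_const _).add ((hfg.const_mul 2).mul_const t)
    calc (0 : ℝ) ≤ ∫ x, (t * f x + g x) ^ 2 ∂μ := integral_nonneg fun x => sq_nonneg _
      _ = ∫ x, (f x ^ 2 * (t * t) + 2 * (f x * g x) * t) + g x ^ 2 ∂μ := by
        congr 1 with x; ring
      _ = _ := by
        rw [integral_add hft hg, integral_add (hf.mul_const _) ((hfg.const_mul 2).mul_const t),
          integral_mul_const, integral_mul_const, integral_const_mul]
  have := discrim_le_zero quadratic_nonneg
  rw [discrim] at this
  linarith

theorem sq_integral_le_measureReal_univ_mul_integral_sq [IsFiniteMeasure μ] {f : α → ℝ}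
    (hf : Integrable f μ) (hf₂ : Integrable (fun x => f x ^ 2) μ) :
    (∫ x, f x ∂μ) ^ 2 ≤ μ.real univ * ∫ x, f x ^ 2 ∂μ := by
  simpa using sq_integral_mul_le_integral_sq_mul_integral_sq (f := fun _ => (1 : ℝ))
    (by simp) hf₂ (by simpa using hf)

theorem sq_div_integral_sq_mul_sq_integral_le [IsFiniteMeasure μ] {f g : α → ℝ}
    (hf : Integrable f μ) (hf₂ : Integrable (fun x => f x ^ 2) μ)
    (hf₂g : Integrable (fun x => f x ^ 2 * g x) μ)
    (hf₂g₂ : Integrable (fun x => f x ^ 2 * g x ^ 2) μ) :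
    ((∫ x, f x ^ 2 * g x ∂μ) / ∫ x, f x ^ 2 ∂μ) ^ 2 * (∫ x, f x ∂μ) ^ 2 ≤
      μ.real univ * ∫ x, f x ^ 2 * g x ^ 2 ∂μ := by
  set C := ∫ x, f x ^ 2 ∂μ
  set D := ∫ x, f x ^ 2 * g x ∂μ
  set E := ∫ x, f x ^ 2 * g x ^ 2 ∂μ
  have hE : 0 ≤ E := integral_nonneg fun x => by positivity
  rcases eq_or_ne C 0 with hC | hC
  · rw [hC, div_zero]
    simpa using mul_nonneg measureReal_nonneg hE
  have hDCE : D ^ 2 ≤ C * E := by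
    have := sq_integral_mul_le_integral_sq_mul_integral_sq (f := f) (g := fun x => f x * g x) hf₂
      (hf₂g₂.congr (ae_of_all _ fun x => by ring)) (hf₂g.congr (ae_of_all _ fun x => by ring))
    convert this using 3 <;> funext x <;> ring
  have hAC := sq_integral_le_measureReal_univ_mul_integral_sq hf hf₂
  calc (D / C) ^ 2 * (∫ x, f x ∂μ) ^ 2 ≤ (D / C) ^ 2 * (μ.real univ * C) := by gcongr
    _ = D ^ 2 / C * μ.real univ := by field_simp
    _ ≤ C * E / C * μ.real univ := by
      have hC₀ : 0 ≤ C := integral_nonneg fun x => sq_nonneg _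
      gcongr
    _ = μ.real univ * E := by field_simp

theorem integral_add_eq_measureReal_univ_and_sq_weightedMean_mul_sq_add_sq_le
    [IsFiniteMeasure μ] {q h w U : α → ℝ}
    (hq : AEStronglyMeasurable q μ) (hh : AEStronglyMeasurable h μ)
    (hw : AEStronglyMeasurable w μ) (hU : AEStronglyMeasurable U μ)
    (hyp : ∀ᵐ x ∂μ, 0 ≤ q x ∧ 0 ≤ h x ∧ q x + h x = 1 ∧
      q x * h x = q x ^ 2 * U x ^ 2 + w x ^ 2) :
    (∫ x, q x ∂μ) + ∫ x, h x ∂μ = μ.real univ ∧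
    ((∫ x, q x ^ 2 * U x ∂μ) / ∫ x, q x ^ 2 ∂μ) ^ 2 * (∫ x, q x ∂μ) ^ 2 + (∫ x, w x ∂μ) ^ 2 ≤
      (∫ x, q x ∂μ) * ∫ x, h x ∂μ := by
  have hbound := hyp.mono fun x ⟨hq, hh, hqh, hqhw⟩ =>
    abs_le_one_of_mul_eq_sq_add_sq hq hh hqh hqhw
  have integrable_of_abs_le_one {f : α → ℝ} (hf : AEStronglyMeasurable f μ)
      (hf₁ : ∀ᵐ x ∂μ, |f x| ≤ 1) : Integrable f μ :=
    .of_bound hf 1 (by simpa only [Real.norm_eq_abs] using hf₁)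
  have hiq := integrable_of_abs_le_one hq (hbound.mono fun x hx => hx.1)
  have hih := integrable_of_abs_le_one hh (hbound.mono fun x hx => hx.2.1)
  have hiw := integrable_of_abs_le_one hw (hbound.mono fun x hx => hx.2.2.1)
  have hiq₂ : Integrable (fun x => q x ^ 2) μ :=
    integrable_of_abs_le_one (hq.pow 2) <| hbound.mono fun x hx => by
      rw [abs_pow]; exact pow_le_one₀ (abs_nonneg _) hx.1
  have hiw₂ : Integrable (fun x => w x ^ 2) μ :=
    integrable_of_abs_le_one (hw.pow 2) <| hbound.mono fun x hx => by
      rw [abs_pow]; exact pow_le_one₀ (abs_nonneg _) hx.2.2.1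
  have hiq₂U : Integrable (fun x => q x ^ 2 * U x) μ :=
    integrable_of_abs_le_one ((hq.pow 2).mul hU) <| hbound.mono fun x hx => by
      rw [show q x ^ 2 * U x = q x * (q x * U x) by ring, abs_mul]
      exact mul_le_one₀ hx.1 (abs_nonneg _) hx.2.2.2
  have hiq₂U₂ : Integrable (fun x => q x ^ 2 * U x ^ 2) μ :=
    integrable_of_abs_le_one ((hq.pow 2).mul (hU.pow 2)) <| hbound.mono fun x hx => by
      rw [← mul_pow, abs_pow]; exact pow_le_one₀ (abs_nonneg _) hx.2.2.2
  have hsum : (∫ x, q x ∂μ) + ∫ x, h x ∂μ = μ.real univ := by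
    rw [← integral_add hiq hih, ← mul_one (μ.real univ), ← smul_eq_mul, ← integral_const]
    exact integral_congr_ae (hyp.mono fun x hx => hx.2.2.1)
  have hconstraint : (∫ x, q x ^ 2 * U x ^ 2 ∂μ) + ∫ x, w x ^ 2 ∂μ =
      (∫ x, q x ∂μ) - ∫ x, q x ^ 2 ∂μ := by
    rw [← integral_add hiq₂U₂ hiw₂, ← integral_sub hiq hiq₂]
    refine integral_congr_ae (hyp.mono fun x ⟨_, _, hqh, hqhw⟩ => ?_)
    linear_combination q x * hqh - hqhw
  refine ⟨hsum, ?_⟩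
  have hU_bound := sq_div_integral_sq_mul_sq_integral_le hiq hiq₂ hiq₂U hiq₂U₂
  have hw_bound := sq_integral_le_measureReal_univ_mul_integral_sq hiw hiw₂
  have hq_bound := sq_integral_le_measureReal_univ_mul_integral_sq hiq hiq₂
  linear_combination hU_bound + hw_bound + hq_bound + μ.real univ * hconstraint -
    (∫ x, q x ∂μ) * hsum

end MeasureTheory

theorem stmt18_general (a b : ℝ) (hab : a < b) (q w h U : ℝ → ℝ)
    (hq : Measurable q) (hw : Measurable w) (hh : Measurable h)
    (hU : Measurable U)
    (hyp : ∀ᵐ ξ ∂(volume.restrict (Icc a b)),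
      0 ≤ q ξ ∧ 0 ≤ h ξ ∧ q ξ + h ξ = 1 ∧
      q ξ * h ξ = (q ξ) ^ 2 * (U ξ) ^ 2 + (w ξ) ^ 2) :
    (1 / (b - a)) * (∫ ξ in Icc a b, q ξ) +
        (1 / (b - a)) * (∫ ξ in Icc a b, h ξ) = 1 ∧
    ((∫ ξ in Icc a b, (q ξ) ^ 2 * U ξ) / (∫ ξ in Icc a b, (q ξ) ^ 2)) ^ 2 *
          ((1 / (b - a)) * ∫ ξ in Icc a b, q ξ) ^ 2 +
        ((1 / (b - a)) * ∫ ξ in Icc a b, w ξ) ^ 2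
      ≤ ((1 / (b - a)) * ∫ ξ in Icc a b, q ξ) *
          ((1 / (b - a)) * ∫ ξ in Icc a b, h ξ) := by
  have hL : (volume.restrict (Icc a b)).real univ = b - a := by simp [hab.le]
  obtain ⟨hsum, hineq⟩ := integral_add_eq_measureReal_univ_and_sq_weightedMean_mul_sq_add_sq_le
    hq.aestronglyMeasurable hh.aestronglyMeasurable hw.aestronglyMeasurable
    hU.aestronglyMeasurable hyp
  refine ⟨?_, ?_⟩
  · rw [← mul_add, hsum, hL, one_div_mul_cancel (sub_pos.2 hab).ne']
  · linear_combination mul_le_mul_of_nonneg_left hineq (sq_nonneg (1 / (b - a)))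

/-- Jensen-type inequality for the cell averages, the key step in
the construction of the approximate initial data. -/
theorem stmt18 (a b : ℝ) (hab : a < b) (q w h U : ℝ → ℝ)
    (hq : Measurable q) (hw : Measurable w) (hh : Measurable h)
    (hU : Measurable U)
    (hyp : ∀ᵐ ξ ∂(volume.restrict (Icc a b)),
      0 ≤ q ξ ∧ 0 ≤ h ξ ∧ q ξ + h ξ = 1 ∧
      q ξ * h ξ = (q ξ) ^ 2 * (U ξ) ^ 2 + (w ξ) ^ 2)
    (hpos : 0 < ∫ ξ in Icc a b, (q ξ) ^ 2) :
    (1 / (b - a)) * (∫ ξ in Icc a b, q ξ) +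
        (1 / (b - a)) * (∫ ξ in Icc a b, h ξ) = 1 ∧
    ((∫ ξ in Icc a b, (q ξ) ^ 2 * U ξ) / (∫ ξ in Icc a b, (q ξ) ^ 2)) ^ 2 *
          ((1 / (b - a)) * ∫ ξ in Icc a b, q ξ) ^ 2 +
        ((1 / (b - a)) * ∫ ξ in Icc a b, w ξ) ^ 2
      ≤ ((1 / (b - a)) * ∫ ξ in Icc a b, q ξ) *
          ((1 / (b - a)) * ∫ ξ in Icc a b, h ξ) :=
  stmt18_general a b hab q w h U hq hw hh hU hyp
end
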